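/- Let α, β, μ ∈ ℂ with |β| < |α| and |μ| < 1, and let T′(μ) = (|α|² − |β|²)/(α + μβ)² be the complex derivative of T at μ. Then conj(T(μ))·T′(μ)/(1 − |T(μ)|²) = β/(α + μβ) + conj(μ)/(1 − |μ|²). (This is the identity μ̄′ dμ′/(1 − |μ′|²) = d log(α + μβ) + μ̄ dμ/(1 − |μ|²) used to prove the coordinate invariance of the bracket between the conformal 2-metric data.) -/

import Mathlib

/-!
Writing `T(μ) = N/D` with `D = α + μβ`, `N = β̄ + μᾱ`, the whole computation rests on
`|D|² − |N|² = (|α|² − |β|²)(1 − |μ|²)`. It gives `1 − |T|² = (|α|² − |β|²)(1 − |μ|²)/|D|²`,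
so the factor `|α|² − |β|²` of `T′` cancels and the left side becomes `N̄/(D(1 − |μ|²))`;
then `N̄ = β(1 − |μ|²) + μ̄D` splits it into the two terms on the right.
-/

/-- The Möbius-type transformation of the conformal 2-metric parameter `μ` induced by
the change of transverse complex coordinate `z = α·z′ + conj(β)·conj(z′)`:
`T(μ) = (conj β + μ·conj α)/(α + μ·β)`. -/
noncomputable def mobiusT (α β μ : ℂ) : ℂ :=
  ((starRingEnd ℂ) β + μ * (starRingEnd ℂ) α) / (α + μ * β)

open ComplexConjugate

theorem add_mul_ne_zero_of_norm_lt {R : Type*} [NonUnitalSeminormedRing R] {α β μ : R}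
    (hβα : ‖β‖ < ‖α‖) (hμ : ‖μ‖ ≤ 1) : α + μ * β ≠ 0 := by
  intro h
  have hα : ‖α‖ = ‖μ * β‖ := by rw [eq_neg_of_add_eq_zero_left h, norm_neg]
  have : ‖μ‖ * ‖β‖ ≤ ‖β‖ := mul_le_of_le_one_left (norm_nonneg β) hμ
  linarith [norm_mul_le μ β]

theorem norm_sq_denom_sub_norm_sq_numer_mobiusT (α β μ : ℂ) :
    (‖α + μ * β‖ : ℂ) ^ 2 - (‖conj β + μ * conj α‖ : ℂ) ^ 2 =
      ((‖α‖ : ℂ) ^ 2 - (‖β‖ : ℂ) ^ 2) * (1 - (‖μ‖ : ℂ) ^ 2) := by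
  simp only [← Complex.mul_conj', map_add, map_mul, Complex.conj_conj]
  ring

theorem one_sub_norm_mobiusT_sq {α β μ : ℂ} (hD : α + μ * β ≠ 0) :
    1 - (‖mobiusT α β μ‖ : ℂ) ^ 2 =
      ((‖α‖ : ℂ) ^ 2 - (‖β‖ : ℂ) ^ 2) * (1 - (‖μ‖ : ℂ) ^ 2) / (‖α + μ * β‖ : ℂ) ^ 2 := by
  have hD' : (‖α + μ * β‖ : ℂ) ≠ 0 := by simpa using hD
  rw [mobiusT, norm_div, Complex.ofReal_div, div_pow,
    ← norm_sq_denom_sub_norm_sq_numer_mobiusT]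
  field_simp

theorem conj_numer_mobiusT (α β μ : ℂ) :
    conj (conj β + μ * conj α) = β * (1 - (‖μ‖ : ℂ) ^ 2) + conj μ * (α + μ * β) := by
  rw [← Complex.mul_conj']
  simp only [map_add, map_mul, Complex.conj_conj]
  ring

/-- For `|β| < |α|` and `|μ| < 1`, with `T′(μ) = (|α|² − |β|²)/(α + μβ)²` the complex
derivative of `T` at `μ`, one has
`conj(T(μ))·T′(μ)/(1 − |T(μ)|²) = β/(α + μβ) + conj(μ)/(1 − |μ|²)`; this is the
identity `μ̄′ dμ′/(1 − |μ′|²) = d log(α + μβ) + μ̄ dμ/(1 − |μ|²)`. -/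
theorem mobiusT_log_deriv_identity (α β μ : ℂ)
    (hβα : ‖β‖ < ‖α‖) (hμ : ‖μ‖ < 1) :
    (starRingEnd ℂ) (mobiusT α β μ) *
        (((‖α‖ ^ 2 - ‖β‖ ^ 2 : ℝ) : ℂ) / (α + μ * β) ^ 2) /
        (1 - (‖mobiusT α β μ‖ : ℂ) ^ 2) =
      β / (α + μ * β) + (starRingEnd ℂ) μ / (1 - (‖μ‖ : ℂ) ^ 2) := by
  have hD : α + μ * β ≠ 0 := add_mul_ne_zero_of_norm_lt hβα hμ.le
  have hK : (‖α‖ : ℂ) ^ 2 - (‖β‖ : ℂ) ^ 2 ≠ 0 := by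
    exact_mod_cast (sub_pos.2 (pow_lt_pow_left₀ hβα (norm_nonneg β) two_ne_zero)).ne'
  have hM : 1 - (‖μ‖ : ℂ) ^ 2 ≠ 0 := by
    exact_mod_cast (sub_pos.2 (pow_lt_one₀ (norm_nonneg μ) hμ two_ne_zero)).ne'
  rw [one_sub_norm_mobiusT_sq hD, mobiusT, map_div₀, conj_numer_mobiusT,
    ← Complex.mul_conj' (α + μ * β)]
  push_cast
  generalize α + μ * β = D at hD ⊢
  have hcD : conj D ≠ 0 := (map_ne_zero _).2 hD
  field_simp
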